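/- Let e_k(x) := e^{ik·x} for k ∈ ℝ³. For all ℓ, L with 0 < 2ℓ < L, all s, b > 0, and all k, k' ∈ (2π/L)ℤ³: (i) if k ≠ k', then L^{−3} ∫_{[0,L]³} t_u[e_k, e_{k'}] du = 0; (ii) for every u ∈ ℝ³, t_u[e_k, e_k] = t_0[e_k, e_k], i.e. the diagonal value is independent of u. Hence L^{−3}∫_{[0,L]³} t_u[e_k,e_{k'}] du = δ_{k,k'} · ℓ³ F(k) with F(k) := ℓ^{−3} t_0[e_k,e_k]. -/

import Mathlib

noncomputable section
open MeasureTheory Real RealInnerProductSpace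
open scoped Classical

/-- ℝ³ as a Euclidean space. -/
abbrev R3 := EuclideanSpace ℝ (Fin 3)

/-- Reinterpret a plain function `Fin 3 → ℝ` as a point of ℝ³. -/
def toR3 (f : Fin 3 → ℝ) : R3 := WithLp.toLp 2 f

/-- The closed unit cube [−1/2,1/2]³. -/
def unitCube : Set R3 := {x : R3 | ∀ i, x i ∈ Set.Icc (-(1/2) : ℝ) (1/2)}

/-- The cube `Λ(u) = u + [−ℓ/2, ℓ/2]³`. -/
def cubeAt (ℓ : ℝ) (u : R3) : Set R3 :=
  {x : R3 | ∀ i, x i - u i ∈ Set.Icc (-(ℓ/2)) (ℓ/2)}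

/-- The box `[0,L]³`. -/
def box (L : ℝ) : Set R3 := {x : R3 | ∀ i, x i ∈ Set.Icc 0 L}

/-- Fourier transform `ĥ(p) = ∫ h(x) e^{−ip·x} dx` of a complex function on ℝ³. -/
def ftC (h : R3 → ℂ) (p : R3) : ℂ :=
  ∫ x : R3, h x * Complex.exp (-(Complex.I * (⟪p, x⟫ : ℂ)))

/-- The plane wave `e_k(x) = e^{ik·x}`. -/
def planeWave (k : R3) (x : R3) : ℂ := Complex.exp (Complex.I * (⟪k, x⟫ : ℂ))

/-- `Q_u f := 1_{Λ(u)} (f − ℓ⁻³ ∫_{Λ(u)} f)`. -/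
def Qu (ℓ : ℝ) (u : R3) (f : R3 → ℂ) : R3 → ℂ :=
  Set.indicator (cubeAt ℓ u) (fun x => f x - (ℓ ^ 3)⁻¹ • ∫ y in cubeAt ℓ u, f y)

/-- The localized kinetic sesquilinear form `t_u[f,h]`. -/
def tform (χ : R3 → ℝ) (b s ℓ : ℝ) (u : R3) (f h : R3 → ℂ) : ℂ :=
  (2 * π : ℂ) ^ (-3 : ℤ) *
      ∫ p : R3, (max (‖p‖ ^ 2 - s ^ (-2 : ℤ) * ℓ ^ (-2 : ℤ)) 0 : ℝ) *
        (starRingEnd ℂ) (ftC (fun y => (χ (ℓ⁻¹ • (y - u)) : ℂ) * Qu ℓ u f y) p) *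
          ftC (fun y => (χ (ℓ⁻¹ • (y - u)) : ℂ) * Qu ℓ u h y) p +
    (b * ℓ ^ (-2 : ℤ) : ℝ) • ∫ x : R3, (starRingEnd ℂ) (Qu ℓ u f x) * Qu ℓ u h x

-- AUX

lemma measurableSet_cubeAt (ℓ : ℝ) (u : R3) : MeasurableSet (cubeAt ℓ u) := by
  have : cubeAt ℓ u = ⋂ i, (fun x : R3 => x i - u i) ⁻¹' Set.Icc (-(ℓ/2)) (ℓ/2) := by
    ext x; simp [cubeAt]
  rw [this]
  refine MeasurableSet.iInter fun i => ?_
  have hm : Measurable (fun x : R3 => x i - u i) := by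
    have : Measurable (fun x : R3 => x i) := by
      exact (EuclideanSpace.proj i : R3 →L[ℝ] ℝ).continuous.measurable
    exact this.sub measurable_const
  exact hm measurableSet_Icc

lemma mem_cubeAt_iff (ℓ : ℝ) (u x : R3) : x ∈ cubeAt ℓ u ↔ x - u ∈ cubeAt ℓ (0 : R3) := by
  constructor <;> intro h i <;> have := h i <;>
    simpa [cubeAt, PiLp.sub_apply] using this

lemma inner_split (p u y : R3) : (⟪p, y⟫ : ℝ) = ⟪p, u⟫ + ⟪p, y - u⟫ := by
  rw [← inner_add_right]
  congr 1
  abel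

lemma ftC_translate (g : R3 → ℂ) (c : ℂ) (u p : R3) :
    ftC (fun y => c * g (y - u)) p
      = c * Complex.exp (-(Complex.I * (⟪p, u⟫ : ℂ))) * ftC g p := by
  unfold ftC
  have h1 : ∀ y : R3, c * g (y - u) * Complex.exp (-(Complex.I * (⟪p, y⟫ : ℂ)))
      = (fun z => c * Complex.exp (-(Complex.I * (⟪p, u⟫ : ℂ))) *
          (g z * Complex.exp (-(Complex.I * (⟪p, z⟫ : ℂ))))) (y - u) := by
    intro y
    simp only
    rw [inner_split p u y]
    push_cast
    rw [mul_add, neg_add, Complex.exp_add]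
    ring
  simp_rw [h1]
  rw [integral_sub_right_eq_self
    (fun z => c * Complex.exp (-(Complex.I * (⟪p, u⟫ : ℂ))) *
      (g z * Complex.exp (-(Complex.I * (⟪p, z⟫ : ℂ))))) u]
  rw [MeasureTheory.integral_const_mul]

lemma planeWave_split (k u y : R3) :
    planeWave k y = planeWave k u * planeWave k (y - u) := by
  unfold planeWave
  rw [← Complex.exp_add, inner_split k u y]
  push_cast
  ring_nf

lemma setIntegral_cubeAt_translate (ℓ : ℝ) (u : R3) (g : R3 → ℂ) :
    (∫ y in cubeAt ℓ u, g (y - u)) = ∫ y in cubeAt ℓ (0 : R3), g y := by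
  rw [← integral_indicator (measurableSet_cubeAt ℓ u),
      ← integral_indicator (measurableSet_cubeAt ℓ 0)]
  have h1 : ∀ y : R3, (cubeAt ℓ u).indicator (fun y => g (y - u)) y
      = (cubeAt ℓ (0:R3)).indicator g (y - u) := by
    intro y
    by_cases h : y ∈ cubeAt ℓ u
    · rw [Set.indicator_of_mem h, Set.indicator_of_mem ((mem_cubeAt_iff ℓ u y).mp h)]
    · rw [Set.indicator_of_notMem h,
        Set.indicator_of_notMem (fun hc => h ((mem_cubeAt_iff ℓ u y).mpr hc))]
  simp_rw [h1]
  exact integral_sub_right_eq_self ((cubeAt ℓ (0:R3)).indicator g) u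

lemma Qu_planeWave_translate (ℓ : ℝ) (u k : R3) (x : R3) :
    Qu ℓ u (planeWave k) x = planeWave k u * Qu ℓ (0 : R3) (planeWave k) (x - u) := by
  unfold Qu
  have hint : (∫ y in cubeAt ℓ u, planeWave k y)
      = planeWave k u * ∫ y in cubeAt ℓ (0:R3), planeWave k y := by
    calc (∫ y in cubeAt ℓ u, planeWave k y)
        = ∫ y in cubeAt ℓ u, planeWave k u * planeWave k (y - u) := by
          simp_rw [← planeWave_split]
      _ = planeWave k u * ∫ y in cubeAt ℓ u, planeWave k (y - u) := by
          rw [MeasureTheory.integral_const_mul]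
      _ = _ := by rw [setIntegral_cubeAt_translate]
  by_cases h : x ∈ cubeAt ℓ u
  · rw [Set.indicator_of_mem h, Set.indicator_of_mem ((mem_cubeAt_iff ℓ u x).mp h), hint,
      planeWave_split k u x]
    rw [mul_sub, mul_smul_comm]
  · rw [Set.indicator_of_notMem h,
      Set.indicator_of_notMem (fun hc => h ((mem_cubeAt_iff ℓ u x).mpr hc)), mul_zero]

lemma exp_key (r : ℝ) (A B : ℂ) (u p k k' : R3) :
    (r : ℂ) * (starRingEnd ℂ) (planeWave k u * Complex.exp (-(Complex.I * (⟪p, u⟫ : ℂ))) * A)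
        * (planeWave k' u * Complex.exp (-(Complex.I * (⟪p, u⟫ : ℂ))) * B)
      = Complex.exp (Complex.I * ((⟪k' - k, u⟫ : ℝ) : ℂ)) * ((r : ℂ) * (starRingEnd ℂ) A * B) := by
  unfold planeWave
  rw [map_mul, map_mul, ← Complex.exp_conj, ← Complex.exp_conj]
  simp only [map_mul, map_neg, Complex.conj_I, Complex.conj_ofReal, neg_mul, neg_neg]
  have h2 : Complex.exp (-(Complex.I * (⟪k, u⟫ : ℝ))) * Complex.exp (Complex.I * (⟪p, u⟫ : ℝ))
      * Complex.exp (Complex.I * (⟪k', u⟫ : ℝ)) * Complex.exp (-(Complex.I * (⟪p, u⟫ : ℝ)))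
      = Complex.exp (Complex.I * ((⟪k' - k, u⟫ : ℝ) : ℂ)) := by
    rw [← Complex.exp_add, ← Complex.exp_add, ← Complex.exp_add]
    congr 1
    have : (⟪k' - k, u⟫ : ℝ) = ⟪k', u⟫ - ⟪k, u⟫ := by rw [inner_sub_left]
    rw [this]
    push_cast
    ring
  calc (r : ℂ) * (Complex.exp (-(Complex.I * (⟪k, u⟫ : ℝ))) * Complex.exp (Complex.I * (⟪p, u⟫ : ℝ)) * (starRingEnd ℂ) A)
        * (Complex.exp (Complex.I * (⟪k', u⟫ : ℝ)) * Complex.exp (-(Complex.I * (⟪p, u⟫ : ℝ))) * B)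
      = (Complex.exp (-(Complex.I * (⟪k, u⟫ : ℝ))) * Complex.exp (Complex.I * (⟪p, u⟫ : ℝ))
          * Complex.exp (Complex.I * (⟪k', u⟫ : ℝ)) * Complex.exp (-(Complex.I * (⟪p, u⟫ : ℝ))))
          * ((r : ℂ) * (starRingEnd ℂ) A * B) := by ring
    _ = _ := by rw [h2]

lemma exp_key2 (A B : ℂ) (u k k' : R3) :
    (starRingEnd ℂ) (planeWave k u * A) * (planeWave k' u * B)
      = Complex.exp (Complex.I * ((⟪k' - k, u⟫ : ℝ) : ℂ)) * ((starRingEnd ℂ) A * B) := by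
  unfold planeWave
  rw [map_mul, ← Complex.exp_conj]
  simp only [map_mul, Complex.conj_I, Complex.conj_ofReal, neg_mul]
  have h2 : Complex.exp (-(Complex.I * (⟪k, u⟫ : ℝ))) * Complex.exp (Complex.I * (⟪k', u⟫ : ℝ))
      = Complex.exp (Complex.I * ((⟪k' - k, u⟫ : ℝ) : ℂ)) := by
    rw [← Complex.exp_add]
    congr 1
    have : (⟪k' - k, u⟫ : ℝ) = ⟪k', u⟫ - ⟪k, u⟫ := by rw [inner_sub_left]
    rw [this]; push_cast; ring
  calc Complex.exp (-(Complex.I * (⟪k, u⟫ : ℝ))) * (starRingEnd ℂ) A * (Complex.exp (Complex.I * (⟪k', u⟫ : ℝ)) * B)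
      = (Complex.exp (-(Complex.I * (⟪k, u⟫ : ℝ))) * Complex.exp (Complex.I * (⟪k', u⟫ : ℝ))) * ((starRingEnd ℂ) A * B) := by ring
    _ = _ := by rw [h2]

lemma tform_translate (χ : R3 → ℝ) (b s ℓ : ℝ) (u k k' : R3) :
    tform χ b s ℓ u (planeWave k) (planeWave k')
      = Complex.exp (Complex.I * ((⟪k' - k, u⟫ : ℝ) : ℂ)) *
          tform χ b s ℓ 0 (planeWave k) (planeWave k') := by
  have hfun : ∀ κ : R3, (fun y => ((χ (ℓ⁻¹ • (y - u)) : ℝ) : ℂ) * Qu ℓ u (planeWave κ) y)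
      = fun y => planeWave κ u *
          ((fun z => ((χ (ℓ⁻¹ • (z - (0:R3))) : ℝ) : ℂ) * Qu ℓ (0:R3) (planeWave κ) z) (y - u)) := by
    intro κ; funext y
    rw [Qu_planeWave_translate]
    simp only [sub_zero]
    ring
  have hft : ∀ (κ : R3) (p : R3),
      ftC (fun y => ((χ (ℓ⁻¹ • (y - u)) : ℝ) : ℂ) * Qu ℓ u (planeWave κ) y) p
        = planeWave κ u * Complex.exp (-(Complex.I * (⟪p, u⟫ : ℂ))) *
            ftC (fun z => ((χ (ℓ⁻¹ • (z - (0:R3))) : ℝ) : ℂ) * Qu ℓ (0:R3) (planeWave κ) z) p := by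
    intro κ p
    rw [hfun κ]
    exact ftC_translate (fun z => ((χ (ℓ⁻¹ • (z - (0:R3))) : ℝ) : ℂ) * Qu ℓ (0:R3) (planeWave κ) z) (planeWave κ u) u p
  have hsub : (∫ x : R3, (starRingEnd ℂ) (Qu ℓ (0:R3) (planeWave k) (x - u)) *
        Qu ℓ (0:R3) (planeWave k') (x - u))
      = ∫ x : R3, (starRingEnd ℂ) (Qu ℓ (0:R3) (planeWave k) x) * Qu ℓ (0:R3) (planeWave k') x :=
    integral_sub_right_eq_self
      (fun z => (starRingEnd ℂ) (Qu ℓ (0:R3) (planeWave k) z) * Qu ℓ (0:R3) (planeWave k') z) u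
  have hcomb : ∀ (z w : ℂ),
      Complex.exp (Complex.I * ((⟪k' - k, u⟫ : ℝ) : ℂ)) * z +
          ((b * ℓ ^ (-2:ℤ) : ℝ)) • (Complex.exp (Complex.I * ((⟪k' - k, u⟫ : ℝ) : ℂ)) * w)
        = Complex.exp (Complex.I * ((⟪k' - k, u⟫ : ℝ) : ℂ)) * (z + (b * ℓ ^ (-2:ℤ) : ℝ) • w) := by
    intro z w
    rw [Complex.real_smul, Complex.real_smul]
    ring
  have pull : ∀ F : R3 → ℂ,
      (∫ p : R3, Complex.exp (Complex.I * ((⟪k' - k, u⟫ : ℝ) : ℂ)) * F p)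
        = Complex.exp (Complex.I * ((⟪k' - k, u⟫ : ℝ) : ℂ)) * ∫ p : R3, F p :=
    fun F => MeasureTheory.integral_const_mul _ F
  unfold tform
  simp_rw [hft, Qu_planeWave_translate ℓ u, exp_key, exp_key2,
    MeasureTheory.integral_const_mul, hsub, hcomb, pull]
  ring

lemma box_eq_preimage (L : ℝ) :
    (⇑(MeasurableEquiv.toLp 2 (Fin 3 → ℝ))) ⁻¹' box L
      = Set.univ.pi (fun _ : Fin 3 => Set.Icc (0:ℝ) L) := by
  ext x
  constructor
  · intro h i _
    exact h i
  · intro h i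
    exact h i (Set.mem_univ i)

lemma measurableSet_box (L : ℝ) : MeasurableSet (box L) := by
  have : box L = ⋂ i, (fun x : R3 => x i) ⁻¹' Set.Icc 0 L := by
    ext x; simp [box]
  rw [this]
  refine MeasurableSet.iInter fun i => ?_
  exact ((EuclideanSpace.proj i : R3 →L[ℝ] ℝ).continuous.measurable) measurableSet_Icc

lemma volume_box (L : ℝ) : volume (box L) = ENNReal.ofReal L ^ 3 := by
  have h := (EuclideanSpace.volume_preserving_symm_measurableEquiv_toLp (Fin 3)).symm
  have h2 : volume (box L) = volume (Set.univ.pi fun _ : Fin 3 => Set.Icc (0:ℝ) L) := by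
    rw [← box_eq_preimage L]
    exact (h.measure_preimage (measurableSet_box L).nullMeasurableSet).symm
  rw [h2, volume_pi_pi]
  simp [Real.volume_Icc]

lemma integral_Icc_exp_zero (L : ℝ) (hL : 0 < L) (m : ℤ) (hm : m ≠ 0) :
    ∫ t in Set.Icc (0:ℝ) L, Complex.exp ((Complex.I * ((2 * π / L * m : ℝ) : ℂ)) * (t : ℂ)) = 0 := by
  have hr : (2 * π / L * m : ℝ) ≠ 0 := by
    apply mul_ne_zero
    · positivity
    · exact_mod_cast hm
  have hc : (Complex.I * ((2 * π / L * m : ℝ) : ℂ)) ≠ 0 :=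
    mul_ne_zero Complex.I_ne_zero (by exact_mod_cast hr)
  rw [MeasureTheory.integral_Icc_eq_integral_Ioc, ← intervalIntegral.integral_of_le hL.le,
    integral_exp_mul_complex hc]
  have h1 : (Complex.I * ((2 * π / L * m : ℝ) : ℂ)) * (L : ℂ) = (m : ℂ) * (2 * (π : ℂ) * Complex.I) := by
    have hL0 : (L : ℂ) ≠ 0 := by exact_mod_cast hL.ne'
    push_cast
    field_simp
  rw [h1, Complex.exp_int_mul_two_pi_mul_I]
  simp

lemma integral_box_exp_eq_zero (L : ℝ) (hL : 0 < L) (n : Fin 3 → ℤ)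
    (hn : ∃ i, n i ≠ 0) :
    ∫ u in box L,
      Complex.exp (Complex.I * ((⟪toR3 (fun i => 2 * π / L * n i), u⟫ : ℝ) : ℂ)) = 0 := by
  have hmp := (EuclideanSpace.volume_preserving_symm_measurableEquiv_toLp (Fin 3)).symm
  rw [← MeasureTheory.MeasurePreserving.setIntegral_preimage_emb hmp
    (MeasurableEquiv.toLp 2 (Fin 3 → ℝ)).measurableEmbedding
    (fun u => Complex.exp (Complex.I * ((⟪toR3 (fun i => 2 * π / L * n i), u⟫ : ℝ) : ℂ)))
    (box L), MeasurableEquiv.symm_symm, box_eq_preimage L]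
  set g : Fin 3 → ℝ → ℂ :=
    fun i t => Complex.exp ((Complex.I * ((2 * π / L * n i : ℝ) : ℂ)) * (t : ℂ)) with hg
  have hFx : ∀ x : Fin 3 → ℝ,
      Complex.exp (Complex.I *
        ((⟪toR3 (fun i => 2 * π / L * n i), ((MeasurableEquiv.toLp 2 (Fin 3 → ℝ)) x : R3)⟫ : ℝ) : ℂ))
        = ∏ i, g i (x i) := by
    intro x
    have hip : (⟪toR3 (fun i => 2 * π / L * n i), ((MeasurableEquiv.toLp 2 (Fin 3 → ℝ)) x : R3)⟫ : ℝ)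
        = ∑ i, (2 * π / L * n i) * x i := by
      rw [PiLp.inner_apply]
      simp [RCLike.inner_apply]
      exact Finset.sum_congr rfl fun i _ => mul_comm _ _
    rw [hip]
    have h2 : Complex.I * ((∑ i, (2 * π / L * n i) * x i : ℝ) : ℂ)
        = ∑ i, (Complex.I * ((2 * π / L * n i : ℝ) : ℂ)) * ((x i : ℝ) : ℂ) := by
      push_cast
      rw [Finset.mul_sum]
      exact Finset.sum_congr rfl fun i _ => by ring
    rw [h2, Complex.exp_sum]
  simp_rw [hFx]
  rw [← MeasureTheory.integral_indicator (MeasurableSet.univ_pi (fun _ => measurableSet_Icc))]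
  have hind : ∀ x : Fin 3 → ℝ,
      (Set.univ.pi fun _ : Fin 3 => Set.Icc (0:ℝ) L).indicator (fun x => ∏ i, g i (x i)) x
        = ∏ i, (Set.Icc (0:ℝ) L).indicator (g i) (x i) := by
    intro x
    by_cases h : x ∈ Set.univ.pi fun _ : Fin 3 => Set.Icc (0:ℝ) L
    · rw [Set.indicator_of_mem h]
      exact Finset.prod_congr rfl fun i _ =>
        (Set.indicator_of_mem (h i (Set.mem_univ i)) (g i)).symm
    · rw [Set.indicator_of_notMem h]
      rw [Set.mem_pi] at h
      push_neg at h
      obtain ⟨i, _, hi⟩ := h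
      exact (Finset.prod_eq_zero (Finset.mem_univ i)
        (Set.indicator_of_notMem hi (g i))).symm
  simp_rw [hind]
  rw [MeasureTheory.volume_pi, MeasureTheory.integral_fintype_prod_eq_prod (ι := Fin 3)
    (fun i => (Set.Icc (0:ℝ) L).indicator (g i)) (μ := fun _ => volume)]
  obtain ⟨i0, hi0⟩ := hn
  apply Finset.prod_eq_zero (Finset.mem_univ i0)
  rw [MeasureTheory.integral_indicator measurableSet_Icc]
  exact integral_Icc_exp_zero L hL (n i0) hi0

/-- diagonality of the averaged localized kinetic form on plane waves. -/
theorem tform_planeWave_diagonal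
    (χ : R3 → ℝ) (hχ_smooth : ContDiff ℝ (⊤ : ℕ∞) χ) (hχ_even : ∀ x, χ (-x) = χ x)
    (hχ_nonneg : ∀ x, 0 ≤ χ x) (hχ_supp : Function.support χ ⊆ unitCube)
    (hχ_norm : ∫ x : R3, (χ x) ^ 2 = 1)
    (ℓ L : ℝ) (hℓ : 0 < ℓ) (hL : 2 * ℓ < L)
    (s b : ℝ) (hs : 0 < s) (hb : 0 < b)
    (k k' : R3)
    (hk : ∃ m : Fin 3 → ℤ, k = toR3 fun i => 2 * π / L * m i)
    (hk' : ∃ m : Fin 3 → ℤ, k' = toR3 fun i => 2 * π / L * m i) :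
    (k ≠ k' →
      (L ^ 3)⁻¹ • (∫ u in box L, tform χ b s ℓ u (planeWave k) (planeWave k')) = 0) ∧
    (∀ u : R3, tform χ b s ℓ u (planeWave k) (planeWave k)
      = tform χ b s ℓ 0 (planeWave k) (planeWave k)) ∧
    (L ^ 3)⁻¹ • (∫ u in box L, tform χ b s ℓ u (planeWave k) (planeWave k'))
      = (if k = k' then (1 : ℂ) else 0) * (ℓ ^ 3 : ℝ) •
          ((ℓ ^ 3 : ℝ)⁻¹ • tform χ b s ℓ 0 (planeWave k) (planeWave k)) := by
  have hL0 : 0 < L := by linarith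
  obtain ⟨m, hm⟩ := hk
  obtain ⟨m', hm'⟩ := hk'
  -- part 2 : diagonal independence of u
  have part2 : ∀ u : R3, tform χ b s ℓ u (planeWave k) (planeWave k)
      = tform χ b s ℓ 0 (planeWave k) (planeWave k) := by
    intro u
    have h := tform_translate χ b s ℓ u k k
    simpa [sub_self, inner_zero_left] using h
  -- part 1 : off-diagonal average vanishes
  have part1 : k ≠ k' →
      (L ^ 3)⁻¹ • (∫ u in box L, tform χ b s ℓ u (planeWave k) (planeWave k')) = 0 := by
    intro hne
    have hdk : k' - k = toR3 (fun i => 2 * π / L * ((m' i - m i : ℤ) : ℝ)) := by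
      ext i
      have h1 : (k' - k) i = k' i - k i := rfl
      rw [h1, hm, hm']
      show 2 * π / L * (m' i : ℝ) - 2 * π / L * (m i : ℝ) = 2 * π / L * ((m' i - m i : ℤ) : ℝ)
      push_cast
      ring
    have hex : ∃ i, (m' i - m i : ℤ) ≠ 0 := by
      by_contra hc
      push_neg at hc
      apply hne
      have : k' - k = 0 := by
        rw [hdk]
        ext i
        show 2 * π / L * ((m' i - m i : ℤ) : ℝ) = 0
        rw [hc i]
        simp
      have := sub_eq_zero.mp this
      exact this.symm
    have hcongr : (∫ u in box L, tform χ b s ℓ u (planeWave k) (planeWave k'))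
        = ∫ u in box L, Complex.exp (Complex.I * ((⟪k' - k, u⟫ : ℝ) : ℂ)) *
            tform χ b s ℓ 0 (planeWave k) (planeWave k') :=
      integral_congr_ae (Filter.Eventually.of_forall fun u => tform_translate χ b s ℓ u k k')
    have pull2 : (∫ u in box L, Complex.exp (Complex.I * ((⟪k' - k, u⟫ : ℝ) : ℂ)) *
          tform χ b s ℓ 0 (planeWave k) (planeWave k'))
        = (∫ u in box L, Complex.exp (Complex.I * ((⟪k' - k, u⟫ : ℝ) : ℂ))) *
            tform χ b s ℓ 0 (planeWave k) (planeWave k') :=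
      MeasureTheory.integral_mul_const _ _
    have hzero : (∫ u in box L, Complex.exp (Complex.I * ((⟪k' - k, u⟫ : ℝ) : ℂ))) = 0 := by
      simp_rw [hdk]
      exact integral_box_exp_eq_zero L hL0 (fun i => m' i - m i) hex
    rw [hcongr, pull2, hzero, zero_mul, smul_zero]
  refine ⟨part1, part2, ?_⟩
  by_cases hkk : k = k'
  · subst hkk
    rw [if_pos rfl, one_mul]
    have hconst : (∫ u in box L, tform χ b s ℓ u (planeWave k) (planeWave k))
        = ∫ u in box L, tform χ b s ℓ 0 (planeWave k) (planeWave k) :=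
      integral_congr_ae (Filter.Eventually.of_forall fun u => part2 u)
    rw [hconst, MeasureTheory.setIntegral_const, measureReal_def, volume_box]
    have htr : ((ENNReal.ofReal L ^ 3).toReal) = L ^ 3 := by
      rw [ENNReal.toReal_pow, ENNReal.toReal_ofReal hL0.le]
    rw [htr, smul_smul, smul_smul, inv_mul_cancel₀ (by positivity : (L:ℝ)^3 ≠ 0),
      mul_inv_cancel₀ (by positivity : (ℓ:ℝ)^3 ≠ 0), one_smul]
  · rw [if_neg hkk, zero_mul, part1 hkk]
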